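/- (Theorem 2(ii).) Under assumptions A1 and A2 with parameter θ ≥ 0, if η : S → ℝ is strictly positive and finite and satisfies ∑_{x∈S} η(x)·B(x,y) = λ*·η(y) for every y ∈ S (all series converging), then there exists a constant c > 0 such that η(y) = c·η*(y) for every y ∈ S, where η*(y) = ∑_{j≥0} e^{θj}·g_j(y). -/

import Mathlib

/-- Matrix powers: `B^0 = I`, `B^{n+1}(x,y) = ∑_w B^n(x,w) B(w,y)`. -/
noncomputable def matPow {S : Type*} [DecidableEq S] (B : S → S → ℝ) : ℕ → S → S → ℝ
  | 0 => fun x y => if x = y then (1 : ℝ) else 0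
  | n + 1 => fun x y => ∑' w, matPow B n x w * B w y

/-- First-return quantities: `fret B z n x` is the probability that the killed chain
with sub-stochastic transition matrix `B`, started at `x`, first hits `z` at time `n`
without having been killed: `f_1(x) = B(x,z)`, `f_{n+1}(x) = ∑_{w ≠ z} B(x,w) f_n(w)`.
(The value at `n = 0` is set to `0` by convention.) -/
noncomputable def fret {S : Type*} [DecidableEq S] (B : S → S → ℝ) (z : S) : ℕ → S → ℝ
  | 0 => fun _ => 0
  | 1 => fun x => B x z
  | n + 2 => fun x => ∑' w, if w = z then 0 else B x w * fret B z (n + 1) w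

/-- `grow B z j y` is the probability that the killed chain started at `z` is at `y`
at time `j` without having been killed or having returned to `z`:
`g_0 = δ_z`, and for `j ≥ 1`, `g_j(z) = 0` and `g_j(y) = ∑_x g_{j-1}(x) B(x,y)` for `y ≠ z`. -/
noncomputable def grow {S : Type*} [DecidableEq S] (B : S → S → ℝ) (z : S) : ℕ → S → ℝ
  | 0 => fun y => if y = z then 1 else 0
  | j + 1 => fun y => if y = z then 0 else ∑' x, grow B z j x * B x y

/-- The Perron-Frobenius column eigenvector candidate
`u*(x) = ∑_{n ≥ 1} e^{θ n} f_n(x)`. -/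
noncomputable def uStar {S : Type*} [DecidableEq S] (B : S → S → ℝ) (z : S) (θ : ℝ)
    (x : S) : ℝ :=
  ∑' n : ℕ, Real.exp (θ * ((n : ℝ) + 1)) * fret B z (n + 1) x

/-- The Perron-Frobenius row eigenvector candidate
`η*(y) = ∑_{j ≥ 0} e^{θ j} g_j(y)`. -/
noncomputable def etaStar {S : Type*} [DecidableEq S] (B : S → S → ℝ) (z : S) (θ : ℝ)
    (y : S) : ℝ :=
  ∑' j : ℕ, Real.exp (θ * (j : ℝ)) * grow B z j y


open ENNReal Real Filter Topology

noncomputable def bE {S : Type*} (B : S → S → ℝ) (x y : S) : ℝ≥0∞ := ENNReal.ofReal (B x y)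

noncomputable def fE {S : Type*} [DecidableEq S] (B : S → S → ℝ) (z : S) : ℕ → S → ℝ≥0∞
  | 0 => fun _ => 0
  | 1 => fun x => bE B x z
  | n + 2 => fun x => ∑' w, if w = z then 0 else bE B x w * fE B z (n + 1) w

noncomputable def gE {S : Type*} [DecidableEq S] (B : S → S → ℝ) (z : S) : ℕ → S → ℝ≥0∞
  | 0 => fun y => if y = z then 1 else 0
  | j + 1 => fun y => if y = z then 0 else ∑' x, gE B z j x * bE B x y

noncomputable def ME {S : Type*} [DecidableEq S] (B : S → S → ℝ) : ℕ → S → S → ℝ≥0∞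
  | 0 => fun x y => if x = y then 1 else 0
  | n + 1 => fun x y => ∑' w, ME B n x w * bE B w y

noncomputable def rE {S : Type*} [DecidableEq S] (B : S → S → ℝ) (z : S) (θ : ℝ)
    (η : S → ℝ) : ℕ → S → ℝ≥0∞
  | 0 => fun y => if y = z then 0 else ENNReal.ofReal (η y)
  | n + 1 => fun y => if y = z then 0 else
      ENNReal.ofReal (Real.exp θ) * ∑' x, rE B z θ η n x * bE B x y

set_option linter.unusedSectionVars false
set_option maxHeartbeats 1000000

section AuxA

variable {S : Type*} [DecidableEq S] (B : S → S → ℝ) (z : S)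
variable (hnn : ∀ x y, 0 ≤ B x y) (hrow : ∀ x, Summable (fun y => B x y))
  (hsub : ∀ x, ∑' y, B x y ≤ 1)

include hnn hrow hsub

lemma B_le_one (x y : S) : B x y ≤ 1 :=
  le_trans (Summable.le_tsum (hrow x) y (fun _ _ => hnn x _)) (hsub x)

lemma fret_nonneg_le_one : ∀ n x, 0 ≤ fret B z (n+1) x ∧ fret B z (n+1) x ≤ 1 := by
  intro n
  induction n with
  | zero => exact fun x => ⟨hnn x z, B_le_one B hnn hrow hsub x z⟩
  | succ n ih =>
    intro x
    have hterm : ∀ w, 0 ≤ (if w = z then 0 else B x w * fret B z (n+1) w) := by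
      intro w; split
      · exact le_refl _
      · exact mul_nonneg (hnn x w) (ih w).1
    have hle : ∀ w, (if w = z then 0 else B x w * fret B z (n+1) w) ≤ B x w := by
      intro w; split
      · exact hnn x w
      · calc B x w * fret B z (n+1) w ≤ B x w * 1 :=
              mul_le_mul_of_nonneg_left (ih w).2 (hnn x w)
          _ = B x w := mul_one _
    have hsumm : Summable (fun w => if w = z then 0 else B x w * fret B z (n+1) w) :=
      Summable.of_nonneg_of_le hterm hle (hrow x)
    constructor
    · exact tsum_nonneg hterm
    · calc (∑' w, if w = z then 0 else B x w * fret B z (n+1) w)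
          ≤ ∑' w, B x w := Summable.tsum_le_tsum hle hsumm (hrow x)
        _ ≤ 1 := hsub x

lemma fret_summable_if (n : ℕ) (x : S) :
    Summable (fun w => if w = z then 0 else B x w * fret B z (n+1) w) := by
  apply Summable.of_nonneg_of_le _ _ (hrow x)
  · intro w; split
    · exact le_refl _
    · exact mul_nonneg (hnn x w) (fret_nonneg_le_one B z hnn hrow hsub n w).1
  · intro w; split
    · exact hnn x w
    · calc B x w * fret B z (n+1) w ≤ B x w * 1 :=
            mul_le_mul_of_nonneg_left (fret_nonneg_le_one B z hnn hrow hsub n w).2 (hnn x w)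
        _ = B x w := mul_one _

lemma fE_eq_ofReal : ∀ n x, fE B z n x = ENNReal.ofReal (fret B z n x) := by
  intro n
  induction n with
  | zero => intro x; simp [fE, fret]
  | succ n ih =>
    match n, ih with
    | 0, _ => intro x; simp [fE, fret, bE]
    | n+1, ih =>
      intro x
      show (∑' w, if w = z then 0 else bE B x w * fE B z (n+1) w)
          = ENNReal.ofReal (∑' w, if w = z then 0 else B x w * fret B z (n+1) w)
      rw [ENNReal.ofReal_tsum_of_nonneg _ (fret_summable_if B z hnn hrow hsub n x)]
      · congr 1; funext w
        split
        · simp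
        · rw [ih, bE, ← ENNReal.ofReal_mul (hnn x w)]
      · intro w; split
        · exact le_refl _
        · exact mul_nonneg (hnn x w) (fret_nonneg_le_one B z hnn hrow hsub n w).1

end AuxA

section AuxB

variable {S : Type*} [DecidableEq S] (B : S → S → ℝ) (z : S)
variable (hnn : ∀ x y, 0 ≤ B x y) (hrow : ∀ x, Summable (fun y => B x y))
  (hsub : ∀ x, ∑' y, B x y ≤ 1)
include hnn hrow hsub

lemma B_le_oneB (x y : S) : B x y ≤ 1 :=
  le_trans (Summable.le_tsum (hrow x) y (fun _ _ => hnn x _)) (hsub x)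

lemma bE_rowB (x : S) : ∑' y, bE B x y ≤ 1 := by
  rw [show (fun y => bE B x y) = fun y => ENNReal.ofReal (B x y) from rfl,
    ← ENNReal.ofReal_tsum_of_nonneg (hnn x) (hrow x)]
  exact le_trans (ENNReal.ofReal_le_ofReal (hsub x)) (by simp)

omit hrow hsub in
lemma grow_nonnegB : ∀ j y, 0 ≤ grow B z j y := by
  intro j
  induction j with
  | zero => intro y; show 0 ≤ (if y = z then (1:ℝ) else 0); split <;> norm_num
  | succ j ih =>
    intro y
    show 0 ≤ (if y = z then 0 else ∑' x, grow B z j x * B x y)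
    split
    · exact le_refl 0
    · exact tsum_nonneg fun x => mul_nonneg (ih x) (hnn x y)

lemma gE_facts : ∀ j, (∑' x, gE B z j x ≤ 1) ∧
    (∀ y, gE B z j y = ENNReal.ofReal (grow B z j y)) := by
  intro j
  induction j with
  | zero =>
    constructor
    · rw [show (fun x => gE B z 0 x) = fun x => if x = z then 1 else 0 from rfl]
      rw [tsum_eq_single z (by intro x hx; simp [hx])]
      simp
    · intro y; simp [gE, grow]; split <;> simp
  | succ j ih =>
    have hsg : Summable (fun x => grow B z j x) := by
      have h1 : ∑' x, gE B z j x ≠ ⊤ := ne_top_of_le_ne_top (by simp) ih.1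
      refine (ENNReal.summable_toReal h1).congr fun x => ?_
      rw [ih.2 x, ENNReal.toReal_ofReal (grow_nonnegB B z hnn j x)]
    have hsumm : ∀ y, Summable (fun x => grow B z j x * B x y) := by
      intro y
      apply Summable.of_nonneg_of_le
        (fun x => mul_nonneg (grow_nonnegB B z hnn j x) (hnn x y)) _ hsg
      intro x
      calc grow B z j x * B x y ≤ grow B z j x * 1 :=
            mul_le_mul_of_nonneg_left (B_le_oneB B hnn hrow hsub x y)
              (grow_nonnegB B z hnn j x)
        _ = grow B z j x := mul_one _
    constructor
    · calc ∑' y, gE B z (j+1) y ≤ ∑' y, ∑' x, gE B z j x * bE B x y := by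
            apply ENNReal.tsum_le_tsum
            intro y
            show (if y = z then 0 else _) ≤ _
            split
            · exact zero_le
            · exact le_refl _
        _ = ∑' x, ∑' y, gE B z j x * bE B x y := ENNReal.tsum_comm
        _ = ∑' x, gE B z j x * ∑' y, bE B x y := by
            congr 1; funext x; exact ENNReal.tsum_mul_left
        _ ≤ ∑' x, gE B z j x * 1 := by
            apply ENNReal.tsum_le_tsum
            intro x
            exact mul_le_mul_right (bE_rowB B hnn hrow hsub x) _
        _ ≤ 1 := by simpa using ih.1
    · intro y
      show (if y = z then 0 else ∑' x, gE B z j x * bE B x y)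
          = ENNReal.ofReal (if y = z then 0 else ∑' x, grow B z j x * B x y)
      split
      · simp
      · rw [ENNReal.ofReal_tsum_of_nonneg
          (fun x => mul_nonneg (grow_nonnegB B z hnn j x) (hnn x y)) (hsumm y)]
        congr 1; funext x
        rw [ih.2 x, bE, ← ENNReal.ofReal_mul (grow_nonnegB B z hnn j x)]
end AuxB

section AuxC

variable {S : Type*} [DecidableEq S] (B : S → S → ℝ) (z : S)
variable (hnn : ∀ x y, 0 ≤ B x y) (hrow : ∀ x, Summable (fun y => B x y))
  (hsub : ∀ x, ∑' y, B x y ≤ 1)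
include hnn hrow hsub

lemma B_le_one' (x y : S) : B x y ≤ 1 :=
  le_trans (Summable.le_tsum (hrow x) y (fun _ _ => hnn x _)) (hsub x)

lemma bE_row' (x : S) : ∑' y, bE B x y ≤ 1 := by
  rw [show (fun y => bE B x y) = fun y => ENNReal.ofReal (B x y) from rfl,
    ← ENNReal.ofReal_tsum_of_nonneg (hnn x) (hrow x)]
  exact le_trans (ENNReal.ofReal_le_ofReal (hsub x)) (by simp)

lemma ME_row : ∀ n x, ∑' y, ME B n x y ≤ 1 := by
  intro n
  induction n with
  | zero =>
    intro x
    rw [show (fun y => ME B 0 x y) = fun y => if x = y then 1 else 0 from rfl]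
    rw [tsum_eq_single x (by intro y hy; simp [Ne.symm hy])]
    simp
  | succ n ih =>
    intro x
    calc ∑' y, ∑' w, ME B n x w * bE B w y
        = ∑' w, ME B n x w * ∑' y, bE B w y := by
          rw [ENNReal.tsum_comm]; congr 1; funext w; exact ENNReal.tsum_mul_left
      _ ≤ ∑' w, ME B n x w * 1 :=
          ENNReal.tsum_le_tsum fun w => mul_le_mul_right (bE_row' B hnn hrow hsub w) _
      _ ≤ 1 := by simpa using ih x

omit hrow hsub in
lemma matPow_nonneg : ∀ n x y, 0 ≤ matPow B n x y := by
  intro n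
  induction n with
  | zero => intro x y; show (0:ℝ) ≤ if x = y then 1 else 0; split <;> norm_num
  | succ n ih =>
    intro x y
    exact tsum_nonneg fun w => mul_nonneg (ih x w) (hnn w y)

lemma ME_eq_ofReal : ∀ n x y, ME B n x y = ENNReal.ofReal (matPow B n x y) := by
  intro n
  induction n with
  | zero => intro x y; show (if x = y then 1 else 0) = _; simp [matPow]; split <;> simp
  | succ n ih =>
    intro x y
    have hsm : Summable (fun w => matPow B n x w) := by
      have h1 : ∑' w, ME B n x w ≠ ⊤ :=
        ne_top_of_le_ne_top (by simp) (ME_row B hnn hrow hsub n x)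
      refine (ENNReal.summable_toReal h1).congr fun w => ?_
      rw [ih x w, ENNReal.toReal_ofReal (matPow_nonneg B hnn n x w)]
    have hsumm : Summable (fun w => matPow B n x w * B w y) := by
      apply Summable.of_nonneg_of_le
        (fun w => mul_nonneg (matPow_nonneg B hnn n x w) (hnn w y)) _ hsm
      intro w
      calc matPow B n x w * B w y ≤ matPow B n x w * 1 :=
            mul_le_mul_of_nonneg_left (B_le_one' B hnn hrow hsub w y)
              (matPow_nonneg B hnn n x w)
        _ = matPow B n x w := mul_one _
    show (∑' w, ME B n x w * bE B w y) = ENNReal.ofReal (∑' w, matPow B n x w * B w y)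
    rw [ENNReal.ofReal_tsum_of_nonneg
      (fun w => mul_nonneg (matPow_nonneg B hnn n x w) (hnn w y)) hsumm]
    congr 1; funext w
    rw [ih x w, bE, ← ENNReal.ofReal_mul (matPow_nonneg B hnn n x w)]

omit hnn hrow hsub in
lemma ME_first_step : ∀ n x y, ME B (n+1) x y = ∑' w, bE B x w * ME B n w y := by
  intro n
  induction n with
  | zero =>
    intro x y
    show (∑' w, ME B 0 x w * bE B w y) = ∑' w, bE B x w * ME B 0 w y
    have h1 : ∀ w, w ≠ x → ME B 0 x w * bE B w y = 0 := by
      intro w hw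
      show (if x = w then 1 else 0) * bE B w y = 0
      rw [if_neg (Ne.symm hw), zero_mul]
    have h2 : ∀ w, w ≠ y → bE B x w * ME B 0 w y = 0 := by
      intro w hw
      show bE B x w * (if w = y then 1 else 0) = 0
      rw [if_neg hw, mul_zero]
    rw [tsum_eq_single x h1, tsum_eq_single y h2]
    show (if x = x then 1 else 0) * bE B x y = bE B x y * (if y = y then 1 else 0)
    simp
  | succ n ih =>
    intro x y
    show (∑' w, ME B (n+1) x w * bE B w y) = ∑' v, bE B x v * ME B (n+1) v y
    calc (∑' w, ME B (n+1) x w * bE B w y)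
        = ∑' w, (∑' v, bE B x v * ME B n v w) * bE B w y := by
          congr 1; funext w; rw [ih x w]
      _ = ∑' w, ∑' v, bE B x v * ME B n v w * bE B w y := by
          congr 1; funext w; exact (ENNReal.tsum_mul_right).symm
      _ = ∑' v, ∑' w, bE B x v * ME B n v w * bE B w y := ENNReal.tsum_comm
      _ = ∑' v, bE B x v * ∑' w, ME B n v w * bE B w y := by
          congr 1; funext v
          rw [← ENNReal.tsum_mul_left]
          congr 1; funext w; ring
      _ = ∑' v, bE B x v * ME B (n+1) v y := rfl

omit hnn hrow hsub in
lemma first_passage_pos : ∀ n y, ME B (n+1) y z ≠ 0 → ∃ m, fE B z (m+1) y ≠ 0 := by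
  intro n
  induction n with
  | zero =>
    intro y h
    rw [ME_first_step] at h
    refine ⟨0, ?_⟩
    show bE B y z ≠ 0
    intro h0
    apply h
    rw [ENNReal.tsum_eq_zero]
    intro w
    show bE B y w * ME B 0 w z = 0
    rcases eq_or_ne w z with rfl | hw
    · rw [h0, zero_mul]
    · show bE B y w * (if w = z then 1 else 0) = 0
      rw [if_neg hw, mul_zero]
  | succ n ih =>
    intro y h
    rw [ME_first_step] at h
    have hex : ∃ w, bE B y w * ME B (n+1) w z ≠ 0 := by
      by_contra hc
      push_neg at hc
      exact h (ENNReal.tsum_eq_zero.2 hc)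
    obtain ⟨w, hw⟩ := hex
    have hb : bE B y w ≠ 0 := fun h0 => hw (by rw [h0, zero_mul])
    have hM : ME B (n+1) w z ≠ 0 := fun h0 => hw (by rw [h0, mul_zero])
    rcases eq_or_ne w z with rfl | hwz
    · exact ⟨0, hb⟩
    · obtain ⟨m, hm⟩ := ih w hM
      refine ⟨m + 1, ?_⟩
      have hle : bE B y w * fE B z (m+1) w ≤ fE B z (m+2) y := by
        have h2 := ENNReal.le_tsum (f := fun v => if v = z then 0
          else bE B y v * fE B z (m+1) v) w
        rw [if_neg hwz] at h2
        exact h2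
      intro h0
      rw [show fE B z (m+1+1) y = fE B z (m+2) y from rfl, h0] at hle
      exact absurd (le_antisymm hle zero_le) (mul_ne_zero hb hm)
end AuxC

section AuxD

variable {S : Type*} [DecidableEq S] (B : S → S → ℝ) (z : S) (θ : ℝ) (η : S → ℝ)

lemma keyswap (a : S → ℝ≥0∞) (m : ℕ) :
    ∑' x, (if x = z then 0 else ∑' w, a w * bE B w x) * fE B z (m+1) x
      = ∑' w, a w * fE B z (m+2) w := by
  have step1 : ∀ x, (if x = z then 0 else ∑' w, a w * bE B w x) * fE B z (m+1) x
      = ∑' w, (if x = z then 0 else a w * (bE B w x * fE B z (m+1) x)) := by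
    intro x
    split
    · rw [zero_mul, tsum_zero]
    · rw [← ENNReal.tsum_mul_right]
      congr 1; funext w; ring
  calc ∑' x, (if x = z then 0 else ∑' w, a w * bE B w x) * fE B z (m+1) x
      = ∑' x, ∑' w, (if x = z then 0 else a w * (bE B w x * fE B z (m+1) x)) := by
        exact tsum_congr step1
    _ = ∑' w, ∑' x, (if x = z then 0 else a w * (bE B w x * fE B z (m+1) x)) :=
        ENNReal.tsum_comm
    _ = ∑' w, a w * ∑' x, (if x = z then 0 else bE B w x * fE B z (m+1) x) := by
        congr 1; funext w
        rw [← ENNReal.tsum_mul_left]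
        congr 1; funext x
        split
        · rw [mul_zero]
        · rfl
    _ = ∑' w, a w * fE B z (m+2) w := rfl

lemma gf : ∀ j m, ∑' x, gE B z j x * fE B z (m+1) x = fE B z (j+m+1) z := by
  intro j
  induction j with
  | zero =>
    intro m
    rw [tsum_eq_single z (by
      intro x hx
      show (if x = z then 1 else 0) * fE B z (m+1) x = 0
      rw [if_neg hx, zero_mul])]
    show (if z = z then 1 else 0) * fE B z (m+1) z = fE B z (0+m+1) z
    rw [if_pos rfl, one_mul]
    norm_num
  | succ j ih =>
    intro m
    have : ∑' x, gE B z (j+1) x * fE B z (m+1) x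
        = ∑' w, gE B z j w * fE B z (m+2) w := keyswap B z (gE B z j) m
    rw [this]
    have h2 := ih (m+1)
    rw [show j + (m+1) + 1 = j + 1 + m + 1 by omega] at h2
    rw [show m + 2 = (m+1) + 1 by omega]
    exact h2

lemma sE_shift : ∀ m n, (ENNReal.ofReal (Real.exp θ))^(m+1)
      * ∑' x, rE B z θ η n x * fE B z (m+1) x
    = ENNReal.ofReal (Real.exp θ) * ∑' x, rE B z θ η (n+m) x * fE B z 1 x := by
  intro m
  induction m with
  | zero => intro n; rw [pow_one]; norm_num
  | succ m ih =>
    intro n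
    have key : ∑' x, rE B z θ η (n+1) x * fE B z (m+1) x
        = ENNReal.ofReal (Real.exp θ) * ∑' w, rE B z θ η n w * fE B z (m+2) w := by
      have : ∀ x, rE B z θ η (n+1) x = (if x = z then 0 else
          ∑' w, (ENNReal.ofReal (Real.exp θ) * rE B z θ η n w) * bE B w x) := by
        intro x
        show (if x = z then 0 else ENNReal.ofReal (Real.exp θ)
            * ∑' w, rE B z θ η n w * bE B w x) = _
        congr 1
        rw [← ENNReal.tsum_mul_left]
        congr 1; funext w; ring
      calc ∑' x, rE B z θ η (n+1) x * fE B z (m+1) x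
          = ∑' x, (if x = z then 0 else
              ∑' w, (ENNReal.ofReal (Real.exp θ) * rE B z θ η n w) * bE B w x)
              * fE B z (m+1) x := by
            exact tsum_congr fun x => by rw [this x]
        _ = ∑' w, (ENNReal.ofReal (Real.exp θ) * rE B z θ η n w) * fE B z (m+2) w :=
            keyswap B z _ m
        _ = ENNReal.ofReal (Real.exp θ) * ∑' w, rE B z θ η n w * fE B z (m+2) w := by
            rw [← ENNReal.tsum_mul_left]
            congr 1; funext w; ring
    have ihn := ih (n+1)
    rw [show n + 1 + m = n + (m+1) by omega] at ihn
    calc (ENNReal.ofReal (Real.exp θ))^(m+2) * ∑' x, rE B z θ η n x * fE B z (m+2) x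
        = (ENNReal.ofReal (Real.exp θ))^(m+1) *
          (ENNReal.ofReal (Real.exp θ) * ∑' x, rE B z θ η n x * fE B z (m+2) x) := by
          ring
      _ = (ENNReal.ofReal (Real.exp θ))^(m+1) *
          ∑' x, rE B z θ η (n+1) x * fE B z ((m+1)) x := by rw [← key]
      _ = ENNReal.ofReal (Real.exp θ) * ∑' x, rE B z θ η (n+(m+1)) x * fE B z 1 x := ihn

variable (hEq : ∀ y, ENNReal.ofReal (Real.exp θ)
    * ∑' x, ENNReal.ofReal (η x) * bE B x y = ENNReal.ofReal (η y))
include hEq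

lemma expandE {n : ℕ}
    (hdec : ∀ x, ENNReal.ofReal (η x) = ENNReal.ofReal (η z)
      * (∑ j ∈ Finset.range (n+1), (ENNReal.ofReal (Real.exp θ))^j * gE B z j x)
      + rE B z θ η n x) (y : S) :
    ENNReal.ofReal (η y) = ENNReal.ofReal (η z)
      * (∑ j ∈ Finset.range (n+1),
          (ENNReal.ofReal (Real.exp θ))^(j+1) * ∑' x, gE B z j x * bE B x y)
      + ENNReal.ofReal (Real.exp θ) * ∑' x, rE B z θ η n x * bE B x y := by
  set q := ENNReal.ofReal (Real.exp θ) with hq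
  set A := ENNReal.ofReal (η z) with hA
  calc ENNReal.ofReal (η y) = q * ∑' x, ENNReal.ofReal (η x) * bE B x y := (hEq y).symm
    _ = q * ∑' x, ((A * (∑ j ∈ Finset.range (n+1), q^j * gE B z j x)) * bE B x y
          + rE B z θ η n x * bE B x y) := by
        congr 1
        exact tsum_congr fun x => by rw [hdec x, add_mul]
    _ = q * ((∑' x, (A * (∑ j ∈ Finset.range (n+1), q^j * gE B z j x)) * bE B x y)
          + ∑' x, rE B z θ η n x * bE B x y) := by rw [ENNReal.tsum_add]
    _ = q * (∑' x, (A * (∑ j ∈ Finset.range (n+1), q^j * gE B z j x)) * bE B x y)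
          + q * ∑' x, rE B z θ η n x * bE B x y := by rw [mul_add]
    _ = A * (∑ j ∈ Finset.range (n+1), q^(j+1) * ∑' x, gE B z j x * bE B x y)
          + q * ∑' x, rE B z θ η n x * bE B x y := by
        congr 1
        calc q * ∑' x, (A * (∑ j ∈ Finset.range (n+1), q^j * gE B z j x)) * bE B x y
            = q * ∑' x, ∑ j ∈ Finset.range (n+1), A * (q^j * (gE B z j x * bE B x y)) := by
              congr 1
              refine tsum_congr fun x => ?_
              rw [mul_assoc, Finset.sum_mul, Finset.mul_sum]
              refine Finset.sum_congr rfl fun j _ => ?_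
              ring
          _ = q * ∑ j ∈ Finset.range (n+1), ∑' x, A * (q^j * (gE B z j x * bE B x y)) := by
              rw [Summable.tsum_finsetSum (fun j _ => ENNReal.summable)]
          _ = A * ∑ j ∈ Finset.range (n+1), q^(j+1) * ∑' x, gE B z j x * bE B x y := by
              rw [Finset.mul_sum, Finset.mul_sum]
              refine Finset.sum_congr rfl fun j _ => ?_
              rw [ENNReal.tsum_mul_left, ENNReal.tsum_mul_left (a := q^j)]
              ring

lemma decompE : ∀ n y, ENNReal.ofReal (η y) = ENNReal.ofReal (η z)
    * (∑ j ∈ Finset.range (n+1), (ENNReal.ofReal (Real.exp θ))^j * gE B z j y)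
    + rE B z θ η n y := by
  intro n
  induction n with
  | zero =>
    intro y
    rw [Finset.range_one, Finset.sum_singleton, pow_zero, one_mul]
    show ENNReal.ofReal (η y) = ENNReal.ofReal (η z) * (if y = z then 1 else 0)
      + (if y = z then 0 else ENNReal.ofReal (η y))
    rcases eq_or_ne y z with rfl | hy
    · rw [if_pos rfl, if_pos rfl, mul_one, add_zero]
    · rw [if_neg hy, if_neg hy, mul_zero, zero_add]
  | succ n ih =>
    intro y
    set q := ENNReal.ofReal (Real.exp θ) with hq
    by_cases hy : y = z
    case pos =>
      rw [hy]
      have hsum : (∑ j ∈ Finset.range (n+2), q^j * gE B z j z) = 1 := by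
        rw [Finset.sum_range_succ']
        have h1 : ∀ i ∈ Finset.range (n+1), q^(i+1) * gE B z (i+1) z = 0 := by
          intro i _
          show q^(i+1) * (if z = z then 0 else _) = 0
          rw [if_pos rfl, mul_zero]
        rw [Finset.sum_congr rfl h1]
        show (∑ _i ∈ Finset.range (n+1), (0:ℝ≥0∞)) + q^0 * (if z = z then 1 else 0) = 1
        rw [Finset.sum_const, smul_zero, pow_zero, if_pos rfl, one_mul, zero_add]
      rw [hsum, mul_one]
      show ENNReal.ofReal (η z) = ENNReal.ofReal (η z) + (if z = z then 0 else _)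
      rw [if_pos rfl, add_zero]
    case neg =>
      have hexp := expandE B z θ η hEq ih y
      rw [hexp]
      congr 1
      · congr 1
        rw [Finset.sum_range_succ' (fun j => q^j * gE B z j y) (n+1)]
        have h0 : q^0 * gE B z 0 y = 0 := by
          show q^0 * (if y = z then 1 else 0) = 0
          rw [if_neg hy, mul_zero]
        rw [h0, add_zero]
        refine Finset.sum_congr rfl fun j _ => ?_
        have hg : gE B z (j+1) y = ∑' x, gE B z j x * bE B x y := by
          show (if y = z then 0 else ∑' x, gE B z j x * bE B x y) = _
          rw [if_neg hy]
        rw [hg]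
      · show q * ∑' x, rE B z θ η n x * bE B x y = rE B z θ η (n+1) y
        rw [show rE B z θ η (n+1) y = if y = z then 0
          else q * ∑' x, rE B z θ η n x * bE B x y from rfl, if_neg hy]

lemma L3 : ∀ n, ENNReal.ofReal (η z) = ENNReal.ofReal (η z)
    * (∑ j ∈ Finset.range (n+1), (ENNReal.ofReal (Real.exp θ))^(j+1) * fE B z (j+1) z)
    + ENNReal.ofReal (Real.exp θ) * ∑' x, rE B z θ η n x * fE B z 1 x := by
  intro n
  have h := expandE B z θ η hEq (decompE B z θ η hEq n) z
  rw [h]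
  congr 2
  refine Finset.sum_congr rfl fun j _ => ?_
  congr 1
  have h := gf B z j 0
  rw [show j + 0 + 1 = j + 1 by omega] at h
  calc (∑' x, gE B z j x * bE B x z) = ∑' x, gE B z j x * fE B z 1 x := rfl
    _ = fE B z (j+1) z := h
end AuxD

/-- Theorem 2(ii): under A1 and A2, any strictly positive finite row eigenvector
of `B` with eigenvalue `λ* = e^{-θ}` is a positive multiple of `η*`. -/
theorem stmt7 {S : Type*} [Countable S] [Nonempty S] [DecidableEq S]
    (B : S → S → ℝ)
    (hnn : ∀ x y, 0 ≤ B x y)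
    (hrow : ∀ x, Summable (fun y => B x y))
    (hsub : ∀ x, ∑' y, B x y ≤ 1)
    (hirr : ∀ x y, ∃ n, 1 ≤ n ∧ 0 < matPow B n x y)
    (z : S) (θ : ℝ) (hθ : 0 ≤ θ)
    (hA1 : ∑' n : ℕ, Real.exp (θ * ((n : ℝ) + 1)) * fret B z (n + 1) z = 1)
    (hA2 : Summable (fun n : ℕ =>
      ((n : ℝ) + 1) * Real.exp (θ * ((n : ℝ) + 1)) * fret B z (n + 1) z))
    (η : S → ℝ) (hηpos : ∀ y, 0 < η y)
    (hηsum : ∀ y, Summable (fun x => η x * B x y))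
    (hηeig : ∀ y, ∑' x, η x * B x y = Real.exp (-θ) * η y) :
    ∃ c : ℝ, 0 < c ∧ ∀ y, η y = c * etaStar B z θ y := by
  classical
  set q : ℝ≥0∞ := ENNReal.ofReal (Real.exp θ) with hqdef
  have hq0 : q ≠ 0 := (ENNReal.ofReal_pos.mpr (Real.exp_pos θ)).ne'
  have hqtop : q ≠ ⊤ := ENNReal.ofReal_ne_top
  have hηEfin : ∀ x, ENNReal.ofReal (η x) ≠ ⊤ := fun x => ENNReal.ofReal_ne_top
  have hηEz0 : ENNReal.ofReal (η z) ≠ 0 := (ENNReal.ofReal_pos.mpr (hηpos z)).ne'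
  -- the eigen equation in ℝ≥0∞
  have hEq : ∀ y, q * ∑' x, ENNReal.ofReal (η x) * bE B x y = ENNReal.ofReal (η y) := by
    intro y
    have h1 : ∑' x, ENNReal.ofReal (η x) * bE B x y
        = ENNReal.ofReal (∑' x, η x * B x y) := by
      rw [ENNReal.ofReal_tsum_of_nonneg (fun x => mul_nonneg (hηpos x).le (hnn x y))
        (hηsum y)]
      exact tsum_congr fun x => (ENNReal.ofReal_mul (hηpos x).le).symm
    rw [h1, hηeig y, ENNReal.ofReal_mul (Real.exp_nonneg _), ← mul_assoc, hqdef,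
      ← ENNReal.ofReal_mul (Real.exp_nonneg _), ← Real.exp_add]
    simp
  -- exponent bookkeeping
  have hexp_pow : ∀ j : ℕ, Real.exp (θ * ((j : ℝ) + 1)) = Real.exp θ ^ (j + 1) := by
    intro j
    rw [← Real.exp_nat_mul]
    congr 1
    push_cast
    ring
  have hqpow : ∀ j : ℕ, q ^ (j + 1) = ENNReal.ofReal (Real.exp (θ * ((j : ℝ) + 1))) := by
    intro j
    rw [hexp_pow j, hqdef, ← ENNReal.ofReal_pow (Real.exp_nonneg θ)]
  have hqpow' : ∀ j : ℕ, q ^ j = ENNReal.ofReal (Real.exp (θ * (j : ℝ))) := by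
    intro j
    rw [show Real.exp (θ * (j : ℝ)) = Real.exp θ ^ j by
      rw [← Real.exp_nat_mul]; congr 1; ring, hqdef,
      ← ENNReal.ofReal_pow (Real.exp_nonneg θ)]
  -- A1 in ℝ≥0∞
  have hA1sum : Summable (fun n : ℕ => Real.exp (θ * ((n : ℝ) + 1)) * fret B z (n + 1) z) := by
    by_contra hns
    rw [tsum_eq_zero_of_not_summable hns] at hA1
    exact one_ne_zero hA1.symm
  have hA1E : ∑' j : ℕ, q ^ (j + 1) * fE B z (j + 1) z = 1 := by
    have hterm : ∀ j : ℕ, q ^ (j + 1) * fE B z (j + 1) z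
        = ENNReal.ofReal (Real.exp (θ * ((j : ℝ) + 1)) * fret B z (j + 1) z) := by
      intro j
      rw [hqpow j, fE_eq_ofReal B z hnn hrow hsub,
        ← ENNReal.ofReal_mul (Real.exp_nonneg _)]
    rw [tsum_congr hterm, ← ENNReal.ofReal_tsum_of_nonneg
      (fun j => mul_nonneg (Real.exp_nonneg _) (fret_nonneg_le_one B z hnn hrow hsub j z).1)
      hA1sum, hA1]
    simp
  -- partial sums of A1 series tend to 1
  have hS : Tendsto (fun n => ∑ j ∈ Finset.range (n + 1), q ^ (j + 1) * fE B z (j + 1) z)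
      atTop (𝓝 1) := by
    have h := ENNReal.tendsto_nat_tsum (fun j => q ^ (j + 1) * fE B z (j + 1) z)
    rw [hA1E] at h
    exact h.comp (tendsto_add_atTop_nat 1)
  -- the killed mass tends to 0
  have hsE : Tendsto (fun n => q * ∑' x, rE B z θ η n x * fE B z 1 x) atTop (𝓝 0) := by
    have hSn_le : ∀ n, (∑ j ∈ Finset.range (n + 1), q ^ (j + 1) * fE B z (j + 1) z) ≤ 1 := by
      intro n
      rw [← hA1E]
      exact ENNReal.sum_le_tsum _
    have hAn_fin : ∀ n, ENNReal.ofReal (η z)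
        * (∑ j ∈ Finset.range (n + 1), q ^ (j + 1) * fE B z (j + 1) z) ≠ ⊤ := by
      intro n
      exact ENNReal.mul_ne_top (hηEfin z) (ne_top_of_le_ne_top one_ne_top (hSn_le n))
    have heq : ∀ n, q * ∑' x, rE B z θ η n x * fE B z 1 x
        = ENNReal.ofReal (η z) - ENNReal.ofReal (η z)
          * (∑ j ∈ Finset.range (n + 1), q ^ (j + 1) * fE B z (j + 1) z) := by
      intro n
      refine ENNReal.eq_sub_of_add_eq (hAn_fin n) ?_
      rw [add_comm]
      exact (L3 B z θ η hEq n).symm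
    have h1 : Tendsto (fun n => ENNReal.ofReal (η z)
        * (∑ j ∈ Finset.range (n + 1), q ^ (j + 1) * fE B z (j + 1) z)) atTop
        (𝓝 (ENNReal.ofReal (η z) * 1)) :=
      ENNReal.Tendsto.const_mul hS (Or.inr (hηEfin z))
    have h2 : Tendsto (fun n => ENNReal.ofReal (η z) - ENNReal.ofReal (η z)
        * (∑ j ∈ Finset.range (n + 1), q ^ (j + 1) * fE B z (j + 1) z)) atTop
        (𝓝 (ENNReal.ofReal (η z) - ENNReal.ofReal (η z) * 1)) :=
      ENNReal.Tendsto.sub tendsto_const_nhds h1 (Or.inl (hηEfin z))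
    rw [mul_one, tsub_self] at h2
    exact h2.congr fun n => (heq n).symm
  -- the remainder tends to 0 pointwise
  have hr : ∀ y, Tendsto (fun n => rE B z θ η n y) atTop (𝓝 0) := by
    intro y
    by_cases hy : y = z
    · have hz : ∀ n, rE B z θ η n y = 0 := by
        intro n
        cases n with
        | zero => show (if y = z then 0 else _) = 0; rw [if_pos hy]
        | succ n => show (if y = z then 0 else _) = 0; rw [if_pos hy]
      simpa [hz] using (tendsto_const_nhds : Tendsto (fun _ : ℕ => (0:ℝ≥0∞)) atTop (𝓝 0))
    · -- find m with fE (m+1) y ≠ 0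
      obtain ⟨n0, hn1, hpos⟩ := hirr y z
      obtain ⟨k, rfl⟩ : ∃ k, n0 = k + 1 := ⟨n0 - 1, by omega⟩
      have hME : ME B (k + 1) y z ≠ 0 := by
        rw [ME_eq_ofReal B hnn hrow hsub]
        exact (ENNReal.ofReal_pos.mpr hpos).ne'
      obtain ⟨m, hfm⟩ := first_passage_pos B z k y hME
      set δ : ℝ≥0∞ := q ^ (m + 1) * fE B z (m + 1) y with hδdef
      have hfEfin : fE B z (m + 1) y ≠ ⊤ := by
        rw [fE_eq_ofReal B z hnn hrow hsub]
        exact ENNReal.ofReal_ne_top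
      have hδ0 : δ ≠ 0 := mul_ne_zero (pow_ne_zero _ hq0) hfm
      have hδtop : δ ≠ ⊤ := ENNReal.mul_ne_top (ENNReal.pow_ne_top hqtop) hfEfin
      have hbound : ∀ n, rE B z θ η n y
          ≤ δ⁻¹ * (q * ∑' x, rE B z θ η (n + m) x * fE B z 1 x) := by
        intro n
        have h1 : δ * rE B z θ η n y
            ≤ q ^ (m + 1) * ∑' x, rE B z θ η n x * fE B z (m + 1) x := by
          have h2 : rE B z θ η n y * fE B z (m + 1) y
              ≤ ∑' x, rE B z θ η n x * fE B z (m + 1) x := ENNReal.le_tsum y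
          calc δ * rE B z θ η n y
              = q ^ (m + 1) * (rE B z θ η n y * fE B z (m + 1) y) := by
                rw [hδdef]; ring
            _ ≤ q ^ (m + 1) * ∑' x, rE B z θ η n x * fE B z (m + 1) x :=
                mul_le_mul_right h2 _
        rw [sE_shift B z θ η m n] at h1
        calc rE B z θ η n y = δ⁻¹ * (δ * rE B z θ η n y) := by
              rw [← mul_assoc, ENNReal.inv_mul_cancel hδ0 hδtop, one_mul]
          _ ≤ δ⁻¹ * (q * ∑' x, rE B z θ η (n + m) x * fE B z 1 x) :=
              mul_le_mul_right h1 _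
      have htend2 : Tendsto (fun n => δ⁻¹
          * (q * ∑' x, rE B z θ η (n + m) x * fE B z 1 x)) atTop (𝓝 0) := by
        have h3 : Tendsto (fun n => q * ∑' x, rE B z θ η (n + m) x * fE B z 1 x)
            atTop (𝓝 0) := hsE.comp (tendsto_add_atTop_nat m)
        have h4 := ENNReal.Tendsto.const_mul h3 (Or.inr (ENNReal.inv_ne_top.mpr hδ0))
        rw [mul_zero] at h4
        exact h4
      exact tendsto_of_tendsto_of_tendsto_of_le_of_le tendsto_const_nhds htend2
        (fun n => zero_le) hbound
  -- the main identity in ℝ≥0∞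
  have hmain : ∀ y, ENNReal.ofReal (η y)
      = ENNReal.ofReal (η z) * ∑' j : ℕ, q ^ j * gE B z j y := by
    intro y
    have hP : Tendsto (fun n => ∑ j ∈ Finset.range (n + 1), q ^ j * gE B z j y) atTop
        (𝓝 (∑' j : ℕ, q ^ j * gE B z j y)) :=
      (ENNReal.tendsto_nat_tsum (fun j => q ^ j * gE B z j y)).comp (tendsto_add_atTop_nat 1)
    have hRHS : Tendsto (fun n => ENNReal.ofReal (η z)
        * (∑ j ∈ Finset.range (n + 1), q ^ j * gE B z j y) + rE B z θ η n y) atTop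
        (𝓝 (ENNReal.ofReal (η z) * (∑' j : ℕ, q ^ j * gE B z j y) + 0)) :=
      (ENNReal.Tendsto.const_mul hP (Or.inr (hηEfin z))).add (hr y)
    have hLHS : Tendsto (fun n => ENNReal.ofReal (η z)
        * (∑ j ∈ Finset.range (n + 1), q ^ j * gE B z j y) + rE B z θ η n y) atTop
        (𝓝 (ENNReal.ofReal (η y))) := by
      have : (fun n => ENNReal.ofReal (η z)
          * (∑ j ∈ Finset.range (n + 1), q ^ j * gE B z j y) + rE B z θ η n y)
          = fun _ => ENNReal.ofReal (η y) := by
        funext n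
        exact (decompE B z θ η hEq n y).symm
      rw [this]
      exact tendsto_const_nhds
    have := tendsto_nhds_unique hLHS hRHS
    rwa [add_zero] at this
  -- finiteness of η*
  have hetafin : ∀ y, (∑' j : ℕ, q ^ j * gE B z j y) ≠ ⊤ := by
    intro y h
    have := hmain y
    rw [h, ENNReal.mul_top hηEz0] at this
    exact (hηEfin y) this
  -- conversion back to ℝ
  refine ⟨η z, hηpos z, fun y => ?_⟩
  have hterm : ∀ j : ℕ, q ^ j * gE B z j y
      = ENNReal.ofReal (Real.exp (θ * (j : ℝ)) * grow B z j y) := by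
    intro j
    rw [hqpow' j, (gE_facts B z hnn hrow hsub j).2 y,
      ← ENNReal.ofReal_mul (Real.exp_nonneg _)]
  have hterm_fin : ∀ j : ℕ, q ^ j * gE B z j y ≠ ⊤ := by
    intro j
    rw [hterm j]
    exact ENNReal.ofReal_ne_top
  have hterm_toReal : ∀ j : ℕ, (q ^ j * gE B z j y).toReal
      = Real.exp (θ * (j : ℝ)) * grow B z j y := by
    intro j
    rw [hterm j, ENNReal.toReal_ofReal
      (mul_nonneg (Real.exp_nonneg _) (grow_nonnegB B z hnn j y))]
  have hetaStar : etaStar B z θ y = (∑' j : ℕ, q ^ j * gE B z j y).toReal := by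
    rw [ENNReal.tsum_toReal_eq hterm_fin]
    exact (tsum_congr hterm_toReal).symm
  have hfinal := congrArg ENNReal.toReal (hmain y)
  rw [ENNReal.toReal_ofReal (hηpos y).le, ENNReal.toReal_mul,
    ENNReal.toReal_ofReal (hηpos z).le, ← hetaStar] at hfinal
  exact hfinal
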